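/- Let L be an atomistic complete lattice (length ≥ 2), T a t-norm on C(L) = A(L) ∪ {0,1}, and T̄ the generated t-norm on L defined by T̄(x,y) = ⋁_{u ∈ κ(x)} ⋁_{v ∈ κ(y)} T(u,v). Then the restriction of T̄ to C(L) equals T. -/

import Mathlib

def IsTnorm {L : Type*} [PartialOrder L] [BoundedOrder L] (T : L → L → L) : Prop :=
  (∀ x : L, Monotone (T x)) ∧ (∀ x y : L, T x y = T y x) ∧
  (∀ x y z : L, T x (T y z) = T (T x y) z) ∧ (∀ x : L, T x ⊤ = x)

open Classical in
noncomputable def TD {L : Type*} [Lattice L] [BoundedOrder L] (x y : L) : L :=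
  if x = ⊤ ∨ y = ⊤ then x ⊓ y else ⊥

def CL (L : Type*) [CompleteLattice L] : Set L := {x | IsAtom x ∨ x = ⊥ ∨ x = ⊤}

def kappa {L : Type*} [CompleteLattice L] (x : L) : Set L :=
  {u | u ∈ CL L ∧ u ≠ ⊥ ∧ u ≤ x}

noncomputable def Tbar {L : Type*} [CompleteLattice L] (T : L → L → L) (x y : L) : L :=
  ⨆ u ∈ kappa x, ⨆ v ∈ kappa y, T u v

def IsTnormOn {L : Type*} [PartialOrder L] [OrderTop L] (C : Set L) (T : L → L → L) : Prop :=
  (∀ x ∈ C, ∀ y ∈ C, T x y ∈ C) ∧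
  (∀ x ∈ C, ∀ y ∈ C, ∀ z ∈ C, y ≤ z → T x y ≤ T x z) ∧
  (∀ x ∈ C, ∀ y ∈ C, T x y = T y x) ∧
  (∀ x ∈ C, ∀ y ∈ C, ∀ z ∈ C, T x (T y z) = T (T x y) z) ∧
  (∀ x ∈ C, T x ⊤ = x)

open Classical in
noncomputable def Talpha {L : Type*} [CompleteLattice L] (α : Set L) (x y : L) : L :=
  if x = ⊤ ∨ y = ⊤ then x ⊓ y else if x = y ∧ x ∈ α then x else ⊥

namespace IsTnormOn

variable {L : Type*} [PartialOrder L] [OrderTop L] {C : Set L} {T : L → L → L}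

theorem mono (hT : IsTnormOn C T) {u v x y : L} (hu : u ∈ C) (hv : v ∈ C) (hx : x ∈ C)
    (hy : y ∈ C) (hux : u ≤ x) (hvy : v ≤ y) : T u v ≤ T x y :=
  calc T u v ≤ T u y := hT.2.1 u hu v hv y hy hvy
    _ = T y u := hT.2.2.1 u hu y hy
    _ ≤ T y x := hT.2.1 y hy u hu x hx hux
    _ = T x y := hT.2.2.1 y hy x hx

variable [OrderBot L]

theorem bot_left (hT : IsTnormOn C T) (hbot : ⊥ ∈ C) (htop : ⊤ ∈ C) {y : L} (hy : y ∈ C) :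
    T ⊥ y = ⊥ :=
  le_bot_iff.mp <| (hT.2.1 ⊥ hbot y hy ⊤ htop le_top).trans_eq (hT.2.2.2.2 ⊥ hbot)

theorem bot_right (hT : IsTnormOn C T) (hbot : ⊥ ∈ C) (htop : ⊤ ∈ C) {x : L} (hx : x ∈ C) :
    T x ⊥ = ⊥ :=
  hT.2.2.1 x hx ⊥ hbot ▸ hT.bot_left hbot htop hx

end IsTnormOn

section CL

variable {L : Type*} [CompleteLattice L]

theorem bot_mem_CL : (⊥ : L) ∈ CL L := Or.inr (Or.inl rfl)

theorem top_mem_CL : (⊤ : L) ∈ CL L := Or.inr (Or.inr rfl)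

theorem mem_kappa_self {x : L} (hx : x ∈ CL L) (hx₀ : x ≠ ⊥) : x ∈ kappa x :=
  ⟨hx, hx₀, le_rfl⟩

theorem Tbar_le {T : L → L → L} (hT : IsTnormOn (CL L) T) {x y : L} (hx : x ∈ CL L)
    (hy : y ∈ CL L) : Tbar T x y ≤ T x y :=
  iSup₂_le fun _ hu ↦ iSup₂_le fun _ hv ↦ hT.mono hu.1 hv.1 hx hy hu.2.2 hv.2.2

theorem le_Tbar (T : L → L → L) {x y : L} (hx : x ∈ CL L) (hy : y ∈ CL L) (hx₀ : x ≠ ⊥)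
    (hy₀ : y ≠ ⊥) : T x y ≤ Tbar T x y :=
  le_iSup₂_of_le x (mem_kappa_self hx hx₀) <| le_iSup₂_of_le y (mem_kappa_self hy hy₀) le_rfl

end CL

theorem stmt6_general {L : Type*} [CompleteLattice L] (T : L → L → L)
    (hT : IsTnormOn (CL L) T) :
    ∀ x ∈ CL L, ∀ y ∈ CL L, Tbar T x y = T x y := by
  intro x hx y hy
  refine le_antisymm (Tbar_le hT hx hy) ?_
  rcases eq_or_ne x ⊥ with rfl | hx₀
  · exact (hT.bot_left bot_mem_CL top_mem_CL hy).trans_le bot_le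
  rcases eq_or_ne y ⊥ with rfl | hy₀
  · exact (hT.bot_right bot_mem_CL top_mem_CL hx).trans_le bot_le
  exact le_Tbar T hx hy hx₀ hy₀

theorem stmt6 {L : Type*} [CompleteLattice L] [IsAtomistic L]
    (hlen : ∃ x : L, x ≠ ⊥ ∧ x ≠ ⊤) (T : L → L → L)
    (hT : IsTnormOn (CL L) T) :
    ∀ x ∈ CL L, ∀ y ∈ CL L, Tbar T x y = T x y :=
  stmt6_general T hT
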